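/- If x₁, ..., x_n are distinct real numbers with x_k < −1 for all k, then for any real numbers y₁, ..., y_n there exists a convex-polynomial p with p(x_k) = y_k for all k. -/

import Mathlib

/-!
Convex combinations of the moment vectors `(x₁ᵐ, …, xₙᵐ)`, `m ∈ ℕ`, are value vectors of
convex-polynomials at the nodes, so it suffices that these moment vectors have all of `ℝⁿ` as
convex hull. A convex subset of a finite-dimensional space is everything once it is dense, and by
Hahn–Banach density follows if no nonzero functional `w ↦ ∑ cₖ wₖ` is bounded above on the moment
vectors. In `∑ cₖ xₖᵐ` the term whose node has the largest modulus dominates; that node is below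
`-1`, so along the right parity of `m` the sum tends to `+∞`.
-/

/-- A real convex-polynomial: a convex combination of the monomials `1, x, x², …`. -/
def IsConvexPolyR (p : Polynomial ℝ) : Prop :=
  ∃ (n : ℕ) (a : ℕ → ℝ), (∀ k, 0 ≤ a k) ∧ (∑ k ∈ Finset.range (n + 1), a k) = 1 ∧
    p = ∑ k ∈ Finset.range (n + 1), Polynomial.C (a k) * Polynomial.X ^ k

open Set Filter Topology Polynomial

theorem isConvexPolyR_iff {p : ℝ[X]} :
    IsConvexPolyR p ↔ (∀ k, 0 ≤ p.coeff k) ∧ p.eval 1 = 1 := by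
  constructor
  · rintro ⟨n, a, ha, hsum, rfl⟩
    refine ⟨fun k => ?_, by simpa [eval_finsetSum] using hsum⟩
    simp only [finsetSum_coeff, coeff_C_mul_X_pow]
    exact Finset.sum_nonneg fun i _ => by split_ifs <;> simp [ha]
  · rintro ⟨hcoeff, h1⟩
    refine ⟨p.natDegree, p.coeff, hcoeff, ?_, p.as_sum_range_C_mul_X_pow⟩
    rw [← h1, eval_eq_sum_range]
    simp

theorem isConvexPolyR_X_pow (m : ℕ) : IsConvexPolyR (X ^ m) :=
  isConvexPolyR_iff.2 ⟨fun k => by rw [coeff_X_pow]; split_ifs <;> norm_num, by simp⟩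

theorem convex_setOf_isConvexPolyR : Convex ℝ {p : ℝ[X] | IsConvexPolyR p} := by
  intro p hp q hq a b ha hb hab
  rw [Set.mem_ofPred_eq, isConvexPolyR_iff] at *
  refine ⟨fun k => ?_, by simp [hp.2, hq.2, hab]⟩
  simp only [coeff_add, coeff_smul, smul_eq_mul]
  exact add_nonneg (mul_nonneg ha (hp.1 k)) (mul_nonneg hb (hq.1 k))

theorem exists_isConvexPolyR_eval_eq_of_mem_convexHull {ι : Type*} {x y : ι → ℝ}
    (hy : y ∈ convexHull ℝ (range fun m : ℕ => fun k => x k ^ m)) :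
    ∃ p, IsConvexPolyR p ∧ ∀ k, p.eval (x k) = y k := by
  let evalAt : ℝ[X] →ₗ[ℝ] ι → ℝ := LinearMap.pi fun k => leval (x k)
  have hsub : (range fun m : ℕ => fun k => x k ^ m) ⊆ evalAt '' {p | IsConvexPolyR p} := by
    rintro _ ⟨m, rfl⟩
    exact ⟨X ^ m, isConvexPolyR_X_pow m, by ext; simp [evalAt]⟩
  obtain ⟨p, hp, hpy⟩ := convexHull_min hsub (convex_setOf_isConvexPolyR.linear_image evalAt) hy
  exact ⟨p, hp, fun k => congrFun hpy k⟩

theorem tendsto_sum_mul_pow_div_pow {ι : Type*} [Fintype ι] {x c : ι → ℝ} {j : ι}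
    (hxj : x j ≠ 0) (hdom : ∀ k ≠ j, c k ≠ 0 → |x k| < |x j|) :
    Tendsto (fun m : ℕ => (∑ k, c k * x k ^ m) / x j ^ m) atTop (𝓝 (c j)) := by
  classical
  have hterm : ∀ k, Tendsto (fun m : ℕ => c k * (x k / x j) ^ m) atTop
      (𝓝 (if k = j then c j else 0)) := by
    intro k
    by_cases hkj : k = j
    · subst hkj; simp [div_self hxj]
    by_cases hck : c k = 0
    · simp [hkj, hck]
    have hratio : |x k / x j| < 1 := by
      rw [abs_div, div_lt_one (abs_pos.2 hxj)]; exact hdom k hkj hck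
    simpa [hkj] using (tendsto_pow_atTop_nhds_zero_of_abs_lt_one hratio).const_mul (c k)
  have := tendsto_finsetSum Finset.univ fun k _ => hterm k
  rw [Finset.sum_ite_eq' Finset.univ j, if_pos (Finset.mem_univ j)] at this
  refine this.congr fun m => ?_
  rw [Finset.sum_div]
  exact Finset.sum_congr rfl fun k _ => by rw [div_pow, mul_div_assoc]

theorem not_bddAbove_range_sum_mul_pow_of_dominant {ι : Type*} [Fintype ι]
    {x c : ι → ℝ} {j : ι} (hxj : x j < -1) (hcj : c j ≠ 0)
    (hdom : ∀ k ≠ j, c k ≠ 0 → |x k| < |x j|) :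
    ¬BddAbove (range fun m : ℕ => ∑ k, c k * x k ^ m) := by
  obtain ⟨e, he⟩ : ∃ e : ℕ, 0 < x j ^ e * c j := by
    rcases hcj.lt_or_gt with hneg | hpos
    · exact ⟨1, by nlinarith⟩
    · exact ⟨0, by simpa⟩
  -- Along `m = 2t + e` the dominant term `c j * x j ^ m` is positive and grows like `(x j ^ 2) ^ t`.
  have hsub : Tendsto (fun t : ℕ => 2 * t + e) atTop atTop :=
    tendsto_atTop_mono (fun t => show t ≤ 2 * t + e by omega) tendsto_id
  have hgrowth : Tendsto (fun t : ℕ => (x j ^ 2) ^ t) atTop atTop :=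
    tendsto_pow_atTop_atTop_of_one_lt (by nlinarith)
  have hratio := ((tendsto_sum_mul_pow_div_pow (by linarith) hdom).comp hsub).const_mul (x j ^ e)
  have htop := hgrowth.atTop_mul_pos he hratio
  have hxj0 : x j ≠ 0 := by linarith
  refine fun hbdd => not_bddAbove_of_tendsto_atTop (htop.congr fun t => ?_)
    (hbdd.mono (range_comp_subset_range (fun t : ℕ => 2 * t + e) _))
  simp only [Function.comp_apply]
  rw [pow_add, pow_mul]
  field_simp

theorem not_bddAbove_range_sum_mul_pow {ι : Type*} [Fintype ι] {x c : ι → ℝ}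
    (hx : Function.Injective x) (hlt : ∀ k, x k < -1) (hc : c ≠ 0) :
    ¬BddAbove (range fun m : ℕ => ∑ k, c k * x k ^ m) := by
  classical
  obtain ⟨i, hi⟩ := Function.ne_iff.1 hc
  obtain ⟨j, hj, hmin⟩ := Finset.exists_min_image {k | c k ≠ 0} x ⟨i, by simpa using hi⟩
  refine not_bddAbove_range_sum_mul_pow_of_dominant (hlt j) (by simpa using hj) fun k hkj hck => ?_
  have hjk : x j < x k := (hmin k (by simpa using hck)).lt_of_ne (hx.ne hkj.symm)
  rw [abs_of_neg (by linarith [hlt k]), abs_of_neg (by linarith [hlt j])]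
  linarith

theorem not_bddAbove_image_range_pow {ι : Type*} [Fintype ι] {x : ι → ℝ}
    (hx : Function.Injective x) (hlt : ∀ k, x k < -1) {f : (ι → ℝ) →ₗ[ℝ] ℝ} (hf : f ≠ 0) :
    ¬BddAbove (f '' range fun m : ℕ => fun k => x k ^ m) := by
  classical
  obtain ⟨c, hfc⟩ : ∃ c : ι → ℝ, ∀ w, f w = ∑ k, c k * w k :=
    ⟨fun k => f fun i => if k = i then 1 else 0, fun w => by
      simp [LinearMap.pi_apply_eq_sum_univ f w, mul_comm]⟩
  have hc : c ≠ 0 := by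
    rintro rfl
    exact hf (LinearMap.ext fun w => by simp [hfc])
  rw [← range_comp]
  simpa only [Function.comp_def, hfc] using not_bddAbove_range_sum_mul_pow hx hlt hc

theorem dense_convexHull_of_forall_not_bddAbove {E : Type*} [AddCommGroup E] [Module ℝ E]
    [TopologicalSpace E] [IsTopologicalAddGroup E] [ContinuousSMul ℝ E] [LocallyConvexSpace ℝ E]
    {s : Set E} (hs : s.Nonempty) (h : ∀ f : StrongDual ℝ E, f ≠ 0 → ¬BddAbove (f '' s)) :
    Dense (convexHull ℝ s) := by
  refine dense_iff_closure_eq.2 (eq_univ_of_forall fun z => by_contra fun hz => ?_)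
  obtain ⟨f, u, hfu, huz⟩ :=
    geometric_hahn_banach_closed_point (convex_convexHull ℝ s).closure isClosed_closure hz
  have hbdd : BddAbove (f '' s) := ⟨u, forall_mem_image.2 fun a ha =>
    (hfu a (subset_closure (subset_convexHull ℝ s ha))).le⟩
  refine h f (fun hf0 => ?_) hbdd
  obtain ⟨a, ha⟩ := hs
  have := hfu a (subset_closure (subset_convexHull ℝ s ha))
  simp only [hf0, zero_apply] at this huz
  linarith

theorem Convex.eq_univ_of_dense {E : Type*} [NormedAddCommGroup E] [NormedSpace ℝ E]
    [FiniteDimensional ℝ E] {s : Set E} (hs : Convex ℝ s) (hd : Dense s) : s = univ := by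
  have hspan : affineSpan ℝ s = ⊤ := by
    rw [← AffineSubspace.coe_eq_univ_iff, ← univ_subset_iff, ← hd.closure_eq]
    exact closure_minimal (subset_affineSpan ℝ s) (affineSpan ℝ s).closed_of_finiteDimensional
  have hint := hs.interior_closure_eq_interior_of_nonempty_interior
    (hs.interior_nonempty_iff_affineSpan_eq_top.2 hspan)
  rw [hd.closure_eq, interior_univ] at hint
  exact eq_univ_of_univ_subset (hint ▸ interior_subset)

/-- Interpolation of prescribed real values by a convex-polynomial. -/
theorem convexPoly_interpolation_real {n : ℕ} (x : Fin n → ℝ)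
    (hdist : Function.Injective x)
    (hlt : ∀ k, x k < -1)
    (y : Fin n → ℝ) :
    ∃ p, IsConvexPolyR p ∧ ∀ k, p.eval (x k) = y k := by
  have hdense : Dense (convexHull ℝ (range fun m : ℕ => fun k => x k ^ m)) :=
    dense_convexHull_of_forall_not_bddAbove (range_nonempty _) fun f hf =>
      not_bddAbove_image_range_pow hdist hlt (f := f.toLinearMap)
        (by rwa [Ne, ← ContinuousLinearMap.toLinearMap_zero, ContinuousLinearMap.coe_inj])
  apply exists_isConvexPolyR_eval_eq_of_mem_convexHull
  rw [(convex_convexHull ℝ _).eq_univ_of_dense hdense]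
  trivial
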